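/- Let S be a PID, π = u·p_1^{γ_1}⋯p_m^{γ_m}, and for each i let C^i ⊆ (S/⟨p_i^{γ_i}⟩)^n be a submodule (a linear code). Define Λ = {λ ∈ S^n : σ̃(λ) ∈ C^1 ⊕ ⋯ ⊕ C^m}, where σ̃: S^n → ⊕_i (S/⟨p_i^{γ_i}⟩)^n is coordinatewise reduction. Then Λ is an S-submodule of S^n containing Λ′ = πS^n, and Λ/Λ′ ≅ C^1 ⊕ C^2 ⊕ ⋯ ⊕ C^m as S-modules. -/
import Mathlib

open scoped DirectSum

/-- elementary divisor construction: with `π = u·∏ p_i^{γ_i}` and linear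
codes `C^i ⊆ (S/⟨p_i^{γ_i}⟩)ⁿ`, the set `Λ = {λ ∈ Sⁿ : σ̃(λ) ∈ C¹ ⊕ ⋯ ⊕ Cᵐ}` is a
submodule of `Sⁿ` containing `Λ' = πSⁿ`, and `Λ/Λ' ≅ C¹ ⊕ ⋯ ⊕ Cᵐ` as `S`-modules. -/
theorem stmt11 {S : Type*} [CommRing S] [IsDomain S] [IsPrincipalIdealRing S]
    {m n : ℕ} (p : Fin m → S) (γ : Fin m → ℕ) (u : S) (hu : IsUnit u)
    (hp : ∀ i, Prime (p i)) (hγ : ∀ i, 1 ≤ γ i)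
    (hdist : ∀ i j, i ≠ j → ¬Associated (p i) (p j))
    (C : ∀ i : Fin m, Submodule S (Fin n → S ⧸ Ideal.span {p i ^ γ i})) :
    let red : ∀ i : Fin m, (Fin n → S) →ₗ[S] (Fin n → S ⧸ Ideal.span {p i ^ γ i}) :=
      fun i => LinearMap.pi fun j =>
        (Ideal.span {p i ^ γ i} : Ideal S).mkQ.comp (LinearMap.proj j)
    let Λ : Submodule S (Fin n → S) := ⨅ i, Submodule.comap (red i) (C i)
    let Λ' : Submodule S (Fin n → S) := Ideal.span {u * ∏ i, p i ^ γ i} • ⊤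
    Λ' ≤ Λ ∧
    Nonempty ((↥Λ ⧸ Submodule.comap Λ.subtype Λ') ≃ₗ[S] ⨁ i : Fin m, ↥(C i)) := by
  intro red Λ Λ'
  classical
  set π : S := u * ∏ i, p i ^ γ i with hπ
  -- pairwise coprimality of the prime powers
  have hqcop : ∀ i j : Fin m, i ≠ j → IsCoprime (p i ^ γ i) (p j ^ γ j) := by
    intro i j hij
    refine IsCoprime.pow ?_
    rw [Prime.coprime_iff_not_dvd (hp i)]
    intro hdvd
    exact hdist i j hij ((hp i).irreducible.associated_of_dvd (hp j).irreducible hdvd)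
  -- membership in Λ' means every coordinate is divisible by π
  have hmemΛ' : ∀ x : Fin n → S, x ∈ Λ' ↔ ∀ j, π ∣ x j := by
    intro x
    constructor
    · intro hx
      refine Submodule.smul_induction_on hx ?_ ?_
      · intro r hr t _ j
        rw [Ideal.mem_span_singleton] at hr
        exact hr.mul_right (t j)
      · intro a b ha hb j
        exact dvd_add (ha j) (hb j)
    · intro h
      choose y hy using h
      have hxy : x = π • y := funext fun j => hy j
      rw [hxy]
      exact Submodule.smul_mem_smul (Ideal.mem_span_singleton_self π) trivial
  -- reducing modulo p i ^ γ i
  have hred : ∀ (i : Fin m) (x : Fin n → S),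
      red i x = 0 ↔ ∀ j, p i ^ γ i ∣ x j := by
    intro i x
    constructor
    · intro h j
      have := congrFun h j
      rw [← Ideal.mem_span_singleton]
      simpa [red, Ideal.Quotient.eq_zero_iff_mem] using this
    · intro h
      funext j
      simpa [red, Ideal.Quotient.eq_zero_iff_mem, Ideal.mem_span_singleton] using h j
  have hdvdπ : ∀ i : Fin m, p i ^ γ i ∣ π :=
    fun i => Dvd.dvd.mul_left (Finset.dvd_prod_of_mem _ (Finset.mem_univ i)) u
  -- Λ' ≤ Λ
  have hle : Λ' ≤ Λ := by
    intro x hx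
    rw [hmemΛ' x] at hx
    refine Submodule.mem_iInf _ |>.2 fun i => ?_
    have h0 : red i x = 0 := (hred i x).2 fun j => (hdvdπ i).trans (hx j)
    show red i x ∈ C i
    rw [h0]
    exact (C i).zero_mem
  refine ⟨hle, ?_⟩
  -- all reductions vanish iff x ∈ Λ'
  have hker_char : ∀ x : Fin n → S, (∀ i, red i x = 0) ↔ ∀ j, π ∣ x j := by
    intro x
    constructor
    · intro h j
      have hprod : (∏ i, p i ^ γ i) ∣ x j := by
        refine Finset.prod_dvd_of_coprime ?_ fun i _ => (hred i x).1 (h i) j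
        intro i hi k hk hik
        exact hqcop i k hik
      calc π ∣ ∏ i, p i ^ γ i := (associated_unit_mul_left _ u hu).dvd
        _ ∣ x j := hprod
    · intro h i
      exact (hred i x).2 fun j => (hdvdπ i).trans (h j)
  -- the linear map Λ → Π i, C i
  have hmem : ∀ (x : ↥Λ) (i : Fin m), red i (x : Fin n → S) ∈ C i := by
    intro x i
    exact Submodule.mem_iInf _ |>.1 x.2 i
  let g : ↥Λ →ₗ[S] ∀ i, ↥(C i) :=
    LinearMap.pi fun i =>
      LinearMap.codRestrict (C i) ((red i).comp Λ.subtype) fun x => hmem x i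
  have hker : LinearMap.ker g = Submodule.comap Λ.subtype Λ' := by
    ext x
    simp only [LinearMap.mem_ker, Submodule.mem_comap, Submodule.subtype_apply]
    rw [hmemΛ' (x : Fin n → S), ← hker_char]
    constructor
    · intro h i
      have := congrFun h i
      exact Subtype.ext_iff.1 this
    · intro h
      funext i
      exact Subtype.ext (h i)
  have hsurj : Function.Surjective g := by
    intro c
    -- lift each c i to Fin n → S
    have hliftI : ∀ i : Fin m, ∃ x : Fin n → S, red i x = (c i).1 := by
      intro i
      have : ∀ j, ∃ s : S, Ideal.Quotient.mk (Ideal.span {p i ^ γ i}) s = (c i).1 j :=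
        fun j => Ideal.Quotient.mk_surjective _
      choose x hx using this
      exact ⟨x, funext fun j => hx j⟩
    choose x hx using hliftI
    -- CRT: find λ congruent to x i mod span {p i ^ γ i} for all i
    have hcrt : ∀ j : Fin n, ∃ l : S, ∀ i : Fin m,
        Ideal.Quotient.mk (Ideal.span {p i ^ γ i}) l
          = Ideal.Quotient.mk (Ideal.span {p i ^ γ i}) (x i j) := by
      intro j
      have hsur := Ideal.quotientInfToPiQuotient_surj
        (I := fun i : Fin m => Ideal.span {p i ^ γ i})
        (fun i k hik => (Ideal.isCoprime_span_singleton_iff _ _).2 (hqcop i k hik))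
      obtain ⟨y, hy⟩ := hsur fun i => Ideal.Quotient.mk _ (x i j)
      obtain ⟨l, rfl⟩ := Ideal.Quotient.mk_surjective y
      refine ⟨l, fun i => ?_⟩
      have := congrFun hy i
      rwa [Ideal.quotientInfToPiQuotient_mk'] at this
    choose l hl using hcrt
    have hredl : ∀ i, red i l = (c i).1 := by
      intro i
      rw [← hx i]
      funext j
      exact hl j i
    have hlΛ : l ∈ Λ := by
      refine Submodule.mem_iInf _ |>.2 fun i => ?_
      show red i l ∈ C i
      rw [hredl i]
      exact (c i).2
    refine ⟨⟨l, hlΛ⟩, ?_⟩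
    funext i
    exact Subtype.ext (hredl i)
  exact ⟨(Submodule.quotEquivOfEq _ _ hker.symm).trans
    ((g.quotKerEquivOfSurjective hsurj).trans
      (DirectSum.linearEquivFunOnFintype S (Fin m) fun i => ↥(C i)).symm)⟩
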